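/- The cone K_L = {x ∈ ℝⁿ : ⟪x,r⟫ ≥ (√(n−1)/√n)‖x‖} is contained in the Pareto cone ℝⁿ₊, and the orthogonal projections of r onto the coordinate hyperplanes {x_i = 0} lie on the boundary of K_L (the cosine of the angle between r and each such projection equals √(n−1)/√n). -/

import Mathlib

/-!
Write `s = ∑ⱼ xⱼ`, so that `⟪x, r⟫ = s / √n`. By Cauchy–Schwarz on the remaining `n - 1`
coordinates, `(s - xᵢ)² ≤ (n - 1)(‖x‖² - xᵢ²)`. If `x` lies in the cone, `s ≥ √(n-1)‖x‖ ≥ 0`, and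
a negative `xᵢ` would give `(s - xᵢ)² > s² ≥ (n - 1)‖x‖²`, a contradiction. For the projection
`p` of `r`, `⟪p, r⟫ = (n - 1)/n` and `‖p‖ = √(n-1)/√n`.
-/

open Finset

section

variable {ι : Type*} [Fintype ι] [DecidableEq ι]

theorem sq_sum_sub_le_card_sub_one_mul (x : ι → ℝ) (i : ι) :
    (∑ j, x j - x i) ^ 2 ≤ (Fintype.card ι - 1) * (∑ j, x j ^ 2 - x i ^ 2) := by
  rw [← sum_erase_eq_sub (mem_univ i), ← sum_erase_eq_sub (mem_univ i), ← card_univ,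
    ← cast_card_erase_of_mem (mem_univ i)]
  exact sq_sum_le_card_mul_sum_sq

theorem sum_ite_eq_zero_const (i : ι) (c : ℝ) :
    ∑ j, (if j = i then 0 else c) = (Fintype.card ι - 1) * c := by
  rw [← sum_erase_add _ _ (mem_univ i), if_pos rfl, add_zero,
    sum_congr rfl fun j hj => if_neg (ne_of_mem_erase hj), sum_const, nsmul_eq_mul,
    cast_card_erase_of_mem (mem_univ i), card_univ]

end

namespace EuclideanSpace

variable {ι : Type*} [Fintype ι]

theorem inner_toLp_const (x : EuclideanSpace ℝ ι) (c : ℝ) :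
    inner ℝ x (WithLp.toLp 2 fun _ : ι => c) = c * ∑ j, x j := by
  simp [PiLp.inner_apply, mul_sum]

variable [DecidableEq ι]

theorem nonneg_of_sqrt_card_sub_one_mul_norm_le_sum (x : EuclideanSpace ℝ ι)
    (hx : √(Fintype.card ι - 1) * ‖x‖ ≤ ∑ j, x j) (i : ι) : 0 ≤ x i := by
  have hcard : (1 : ℝ) ≤ Fintype.card ι := by exact_mod_cast Fintype.card_pos_iff.mpr ⟨i⟩
  have hsq : (Fintype.card ι - 1) * ‖x‖ ^ 2 ≤ (∑ j, x j) ^ 2 := by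
    calc (Fintype.card ι - 1) * ‖x‖ ^ 2 = (√(Fintype.card ι - 1) * ‖x‖) ^ 2 := by
          rw [mul_pow, Real.sq_sqrt (by linarith)]
      _ ≤ (∑ j, x j) ^ 2 := pow_le_pow_left₀ (by positivity) hx 2
  have hcs := sq_sum_sub_le_card_sub_one_mul (x ·) i
  rw [← real_norm_sq_eq] at hcs
  have hs : 0 ≤ ∑ j, x j := le_trans (by positivity) hx
  by_contra! hxi
  nlinarith [mul_nonneg (sub_nonneg.mpr hcard) (sq_nonneg (x i))]

theorem norm_toLp_ite_eq_zero_const (i : ι) (c : ℝ) :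
    ‖(WithLp.toLp 2 fun j : ι => if j = i then 0 else c : EuclideanSpace ℝ ι)‖
      = √(Fintype.card ι - 1) * |c| := by
  have hsq : ‖(WithLp.toLp 2 fun j : ι => if j = i then 0 else c : EuclideanSpace ℝ ι)‖ ^ 2
      = (Fintype.card ι - 1) * c ^ 2 := by
    simp [real_norm_sq_eq, ite_pow, sum_ite_eq_zero_const]
  rw [← Real.sqrt_sq (norm_nonneg _), hsq, Real.sqrt_mul', Real.sqrt_sq_eq_abs]
  positivity

end EuclideanSpace

open EuclideanSpace in
theorem stmt8_general (n : ℕ) :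
    let r : EuclideanSpace ℝ (Fin n) := WithLp.toLp 2 (fun _ => 1 / Real.sqrt n)
    {x : EuclideanSpace ℝ (Fin n) | (Real.sqrt (n - 1) / Real.sqrt n) * ‖x‖ ≤ inner ℝ x r}
        ⊆ {x : EuclideanSpace ℝ (Fin n) | ∀ i, 0 ≤ x i} ∧
      ∀ i : Fin n,
        let p : EuclideanSpace ℝ (Fin n) := WithLp.toLp 2 (fun j => if j = i then 0 else 1 / Real.sqrt n)
        (inner ℝ p r : ℝ) = (Real.sqrt (n - 1) / Real.sqrt n) * ‖p‖ := by
  intro r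
  refine ⟨fun x hx i => ?_, fun i => ?_⟩
  · have hn : 0 < √(n : ℝ) := Real.sqrt_pos.mpr (by exact_mod_cast i.pos)
    refine nonneg_of_sqrt_card_sub_one_mul_norm_le_sum x ?_ i
    rw [Set.mem_ofPred_eq, inner_toLp_const, div_mul_eq_mul_div, one_div_mul_eq_div,
      div_le_div_iff_of_pos_right hn] at hx
    rwa [Fintype.card_fin]
  · have hn : (1 : ℝ) ≤ n := by exact_mod_cast i.pos
    simp only [r, inner_toLp_const, norm_toLp_ite_eq_zero_const, Fintype.card_fin,
      sum_ite_eq_zero_const]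
    rw [abs_of_nonneg (by positivity)]
    linear_combination -(1 / √(n : ℝ)) ^ 2 * Real.mul_self_sqrt (by linarith : (0 : ℝ) ≤ n - 1)

/-- `K_L ⊆ ℝⁿ₊`, and the orthogonal projection of `r` onto each coordinate
hyperplane `{x_i = 0}` lies on the boundary of `K_L`. -/
theorem stmt8 (n : ℕ) (hn : 2 ≤ n) :
    let r : EuclideanSpace ℝ (Fin n) := WithLp.toLp 2 (fun _ => 1 / Real.sqrt n)
    {x : EuclideanSpace ℝ (Fin n) | (Real.sqrt (n - 1) / Real.sqrt n) * ‖x‖ ≤ inner ℝ x r}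
        ⊆ {x : EuclideanSpace ℝ (Fin n) | ∀ i, 0 ≤ x i} ∧
      ∀ i : Fin n,
        let p : EuclideanSpace ℝ (Fin n) := WithLp.toLp 2 (fun j => if j = i then 0 else 1 / Real.sqrt n)
        (inner ℝ p r : ℝ) = (Real.sqrt (n - 1) / Real.sqrt n) * ‖p‖ :=
  stmt8_general n
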